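/- arXiv:math/0508591 — 5 statements merged into one kernel-verified Lean document; each statement's English description precedes it below -/
import Mathlib

section
/- For nonzero vectors x, y, z in a finite-dimensional real or complex inner product space, |sin(θ(x,z)) − sin(θ(y,z))| ≤ sin(θ(x,y)), where θ(u,v) = arccos(|(u,v)|/(‖u‖‖v‖)) ∈ [0, π/2] is the acute angle between u and v. -/
/-!
`‖x‖ sin θ(x,z)` is the length of the component of `x` orthogonal to `z`. Split `x` into its
components along `y` and orthogonal to `y` and remove from both their components along `z`:
the first contributes at most `‖x‖ sin θ(x,y)`, the second, a multiple of `y` of norm at most `‖x‖`,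
at most `‖x‖ sin θ(y,z)`. This gives the triangle inequality
`sin θ(x,z) ≤ sin θ(x,y) + sin θ(y,z)`, and the claim is its reverse form.
-/

open scoped InnerProductSpace

/-- The acute angle between two vectors of an inner product space over `𝕜 = ℝ` or `ℂ`:
`θ(x,y) = arccos (|(x,y)| / (‖x‖‖y‖)) ∈ [0, π/2]`. -/
noncomputable def acuteAngle (𝕜 : Type*) {H : Type*} [RCLike 𝕜] [NormedAddCommGroup H]
    [InnerProductSpace 𝕜 H] (x y : H) : ℝ :=
  Real.arccos (‖(inner 𝕜 x y : 𝕜)‖ / (‖x‖ * ‖y‖))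

section

variable {𝕜 H : Type*} [RCLike 𝕜] [NormedAddCommGroup H] [InnerProductSpace 𝕜 H]

theorem acuteAngle_comm (x y : H) : acuteAngle 𝕜 x y = acuteAngle 𝕜 y x := by
  rw [acuteAngle, acuteAngle, norm_inner_symm, mul_comm]

theorem acuteAngle_zero_left (y : H) : acuteAngle 𝕜 0 y = Real.pi / 2 := by
  simp [acuteAngle]

theorem sin_acuteAngle_nonneg (x y : H) : 0 ≤ Real.sin (acuteAngle 𝕜 x y) :=
  Real.sin_nonneg_of_nonneg_of_le_pi (Real.arccos_nonneg _) (Real.arccos_le_pi _)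

theorem norm_starProjection_singleton (x z : H) :
    ‖(𝕜 ∙ z).starProjection x‖ = ‖⟪x, z⟫_𝕜‖ / ‖z‖ := by
  rcases eq_or_ne z 0 with rfl | hz
  · simp
  rw [Submodule.starProjection_singleton, norm_smul, norm_div, RCLike.norm_ofReal,
    norm_inner_symm]
  field_simp
  simp

theorem norm_mul_sin_acuteAngle (x z : H) :
    ‖x‖ * Real.sin (acuteAngle 𝕜 x z) = ‖(𝕜 ∙ z)ᗮ.starProjection x‖ := by
  have hpyth := (𝕜 ∙ z).norm_sq_eq_add_norm_sq_starProjection x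
  rw [norm_starProjection_singleton, div_pow] at hpyth
  have hsq : ‖x‖ ^ 2 * (1 - (‖⟪x, z⟫_𝕜‖ / (‖x‖ * ‖z‖)) ^ 2) =
      ‖(𝕜 ∙ z)ᗮ.starProjection x‖ ^ 2 := by
    rcases eq_or_ne x 0 with rfl | hx
    · simp
    rw [mul_comm ‖x‖, ← div_div]
    field_simp
    linarith
  rw [acuteAngle, Real.sin_arccos, ← Real.sqrt_sq (norm_nonneg ((𝕜 ∙ z)ᗮ.starProjection x)),
    ← hsq, Real.sqrt_mul (sq_nonneg _), Real.sqrt_sq (norm_nonneg x)]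

theorem sin_acuteAngle_le_add (x y z : H) :
    Real.sin (acuteAngle 𝕜 x z) ≤ Real.sin (acuteAngle 𝕜 x y) + Real.sin (acuteAngle 𝕜 y z) := by
  rcases eq_or_ne x 0 with rfl | hx
  · rw [acuteAngle_zero_left, acuteAngle_zero_left, le_add_iff_nonneg_right]
    exact sin_acuteAngle_nonneg y z
  obtain ⟨t, ht⟩ := Submodule.mem_span_singleton.1 ((𝕜 ∙ y).starProjection_apply_mem x)
  have hsplit : x = (𝕜 ∙ y)ᗮ.starProjection x + t • y := by
    rw [ht, add_comm, Submodule.starProjection_add_starProjection_orthogonal]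
  refine le_of_mul_le_mul_left ?_ (norm_pos_iff.2 hx)
  calc ‖x‖ * Real.sin (acuteAngle 𝕜 x z)
      = ‖(𝕜 ∙ z)ᗮ.starProjection ((𝕜 ∙ y)ᗮ.starProjection x) +
          t • (𝕜 ∙ z)ᗮ.starProjection y‖ := by
        rw [norm_mul_sin_acuteAngle, ← map_smul, ← map_add, ← hsplit]
    _ ≤ ‖(𝕜 ∙ y)ᗮ.starProjection x‖ + ‖t • y‖ * Real.sin (acuteAngle 𝕜 y z) := by
        refine (norm_add_le _ _).trans (add_le_add ?_ ?_)
        · exact Submodule.norm_starProjection_apply_le _ _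
        · rw [norm_smul, norm_smul, mul_assoc, norm_mul_sin_acuteAngle]
    _ ≤ ‖x‖ * Real.sin (acuteAngle 𝕜 x y) + ‖x‖ * Real.sin (acuteAngle 𝕜 y z) := by
        rw [norm_mul_sin_acuteAngle, ht]
        gcongr
        · exact sin_acuteAngle_nonneg y z
        · exact Submodule.norm_starProjection_apply_le _ _
    _ = ‖x‖ * (Real.sin (acuteAngle 𝕜 x y) + Real.sin (acuteAngle 𝕜 y z)) := by ring

end

theorem sin_angle_diff_le_general {𝕜 H : Type*} [RCLike 𝕜] [NormedAddCommGroup H]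
    [InnerProductSpace 𝕜 H]
    (x y z : H) :
    |Real.sin (acuteAngle 𝕜 x z) - Real.sin (acuteAngle 𝕜 y z)| ≤
      Real.sin (acuteAngle 𝕜 x y) := by
  have hxz := sin_acuteAngle_le_add (𝕜 := 𝕜) x y z
  have hyz := sin_acuteAngle_le_add (𝕜 := 𝕜) y x z
  rw [acuteAngle_comm y x] at hyz
  exact abs_sub_le_iff.2 ⟨by linarith, by linarith⟩

/-- For nonzero vectors `x, y, z` in a finite-dimensional real or complex inner product space,
`|sin θ(x,z) − sin θ(y,z)| ≤ sin θ(x,y)`. -/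
theorem sin_angle_diff_le {𝕜 H : Type*} [RCLike 𝕜] [NormedAddCommGroup H]
    [InnerProductSpace 𝕜 H] [FiniteDimensional 𝕜 H]
    (x y z : H) (hx : x ≠ 0) (hy : y ≠ 0) (hz : z ≠ 0) :
    |Real.sin (acuteAngle 𝕜 x z) - Real.sin (acuteAngle 𝕜 y z)| ≤
      Real.sin (acuteAngle 𝕜 x y) :=
  sin_angle_diff_le_general x y z
end

section
/- For nonzero vectors x, y, z in a finite-dimensional real or complex inner product space, |cos(θ(x,z)) − cos(θ(y,z))| ≤ sin(θ(x,y)). -/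
/-!
Normalizing each vector to norm at most one (`‖v‖⁻¹ • v`, which is `0` for `v = 0`) turns
`cos θ(x,z)` into `‖⟪x,z⟫‖` and `sin θ(x,y)` into `√(1 - ‖⟪x,y⟫‖²)`. Splitting off the component
of `x` along `y` then bounds `‖⟪x,z⟫‖` by `‖⟪y,z⟫‖` plus the norm of the orthogonal remainder,
which is at most `√(1 - ‖⟪x,y⟫‖²)`.
-/

open scoped InnerProductSpace

section
variable {𝕜 H : Type*} [RCLike 𝕜] [NormedAddCommGroup H] [InnerProductSpace 𝕜 H]

theorem norm_inner_div_norm_mul_norm_le_one (x y : H) : ‖⟪x, y⟫_𝕜‖ / (‖x‖ * ‖y‖) ≤ 1 :=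
  div_le_one_of_le₀ (norm_inner_le_norm x y) (by positivity)

theorem cos_acuteAngle (x y : H) :
    Real.cos (acuteAngle 𝕜 x y) = ‖⟪x, y⟫_𝕜‖ / (‖x‖ * ‖y‖) :=
  Real.cos_arccos (by linarith [show 0 ≤ ‖⟪x, y⟫_𝕜‖ / (‖x‖ * ‖y‖) by positivity])
    (norm_inner_div_norm_mul_norm_le_one x y)

theorem sin_acuteAngle (x y : H) :
    Real.sin (acuteAngle 𝕜 x y) = √(1 - (‖⟪x, y⟫_𝕜‖ / (‖x‖ * ‖y‖)) ^ 2) :=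
  Real.sin_arccos _

theorem norm_inner_sub_norm_inner_le {x y z : H} (hx : ‖x‖ ≤ 1) (hy : ‖y‖ ≤ 1) (hz : ‖z‖ ≤ 1) :
    ‖⟪x, z⟫_𝕜‖ - ‖⟪y, z⟫_𝕜‖ ≤ √(1 - ‖⟪x, y⟫_𝕜‖ ^ 2) := by
  set c := ⟪y, x⟫_𝕜
  set w := x - c • y
  have hc : ‖c‖ ≤ 1 := by nlinarith [norm_inner_le_norm (𝕜 := 𝕜) y x, norm_nonneg x, norm_nonneg y]
  have hw : ‖w‖ ≤ √(1 - ‖⟪x, y⟫_𝕜‖ ^ 2) := by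
    have hw_sq : ‖w‖ ^ 2 = ‖x‖ ^ 2 - (2 - ‖y‖ ^ 2) * ‖c‖ ^ 2 := by
      rw [@norm_sub_sq 𝕜, inner_smul_right, ← inner_conj_symm, RCLike.mul_conj, norm_smul,
        ← RCLike.ofReal_pow, RCLike.ofReal_re]
      ring
    rw [norm_inner_symm]
    apply Real.le_sqrt_of_sq_le
    nlinarith [pow_le_one₀ (n := 2) (norm_nonneg x) hx, pow_le_one₀ (n := 2) (norm_nonneg y) hy,
      sq_nonneg ‖c‖]
  have hxz : ⟪x, z⟫_𝕜 = ⟪w, z⟫_𝕜 + starRingEnd 𝕜 c * ⟪y, z⟫_𝕜 := by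
    simp [w, inner_sub_left, inner_smul_left]
  calc ‖⟪x, z⟫_𝕜‖ - ‖⟪y, z⟫_𝕜‖
      ≤ ‖⟪w, z⟫_𝕜‖ + ‖c‖ * ‖⟪y, z⟫_𝕜‖ - ‖⟪y, z⟫_𝕜‖ := by
        grw [hxz, norm_add_le, norm_mul, RCLike.norm_conj]
    _ ≤ ‖w‖ * ‖z‖ := by
        nlinarith [norm_inner_le_norm (𝕜 := 𝕜) w z, norm_nonneg ⟪y, z⟫_𝕜]
    _ ≤ √(1 - ‖⟪x, y⟫_𝕜‖ ^ 2) := by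
        nlinarith [norm_nonneg w, norm_nonneg z]

theorem abs_norm_inner_sub_norm_inner_le {x y z : H} (hx : ‖x‖ ≤ 1) (hy : ‖y‖ ≤ 1)
    (hz : ‖z‖ ≤ 1) : |‖⟪x, z⟫_𝕜‖ - ‖⟪y, z⟫_𝕜‖| ≤ √(1 - ‖⟪x, y⟫_𝕜‖ ^ 2) := by
  refine abs_sub_le_iff.2 ⟨norm_inner_sub_norm_inner_le hx hy hz, ?_⟩
  rw [norm_inner_symm (𝕜 := 𝕜) x y]
  exact norm_inner_sub_norm_inner_le (𝕜 := 𝕜) hy hx hz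

theorem norm_inv_norm_smul_le_one (x : H) : ‖(‖x‖ : 𝕜)⁻¹ • x‖ ≤ 1 := by
  rw [norm_smul, norm_inv, RCLike.norm_ofReal, abs_norm]
  exact inv_mul_le_one_of_le₀ le_rfl (norm_nonneg x)

theorem norm_inner_inv_norm_smul (x y : H) :
    ‖⟪(‖x‖ : 𝕜)⁻¹ • x, (‖y‖ : 𝕜)⁻¹ • y⟫_𝕜‖ = ‖⟪x, y⟫_𝕜‖ / (‖x‖ * ‖y‖) := by
  rw [inner_smul_left, inner_smul_right, norm_mul, norm_mul, RCLike.norm_conj, norm_inv, norm_inv,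
    RCLike.norm_ofReal, RCLike.norm_ofReal, abs_norm, abs_norm]
  ring

end

theorem cos_angle_diff_le_general {𝕜 H : Type*} [RCLike 𝕜] [NormedAddCommGroup H]
    [InnerProductSpace 𝕜 H]
    (x y z : H) :
    |Real.cos (acuteAngle 𝕜 x z) - Real.cos (acuteAngle 𝕜 y z)| ≤
      Real.sin (acuteAngle 𝕜 x y) := by
  simp only [cos_acuteAngle, sin_acuteAngle, ← norm_inner_inv_norm_smul]
  exact abs_norm_inner_sub_norm_inner_le (norm_inv_norm_smul_le_one x)
    (norm_inv_norm_smul_le_one y) (norm_inv_norm_smul_le_one z)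

/-- For nonzero vectors `x, y, z` in a finite-dimensional real or complex inner product space,
`|cos θ(x,z) − cos θ(y,z)| ≤ sin θ(x,y)`. -/
theorem cos_angle_diff_le {𝕜 H : Type*} [RCLike 𝕜] [NormedAddCommGroup H]
    [InnerProductSpace 𝕜 H] [FiniteDimensional 𝕜 H]
    (x y z : H) (hx : x ≠ 0) (hy : y ≠ 0) (hz : z ≠ 0) :
    |Real.cos (acuteAngle 𝕜 x z) - Real.cos (acuteAngle 𝕜 y z)| ≤
      Real.sin (acuteAngle 𝕜 x y) :=
  cos_angle_diff_le_general x y z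
end

section
/- Let A and B be Hermitian operators on an n-dimensional inner product space and let Λ(·) denote the vector of eigenvalues arranged in nonincreasing order. Then Λ(A+B) is weakly majorized by Λ(A) + Λ(B), i.e. for each k = 1,…,n, the sum of the k largest eigenvalues of A+B is at most the sum of the k largest eigenvalues of A plus the sum of the k largest eigenvalues of B. -/
open Finset

local notation "⟪" x ", " y "⟫" => @inner ℂ _ _ x y

/-- `μ` is the listing, in nonincreasing order, of the eigenvalues (with multiplicity)
of the Hermitian matrix `A`. -/
def IsEigListDesc {n : ℕ} (A : Matrix (Fin n) (Fin n) ℂ) (hA : A.IsHermitian)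
    (μ : Fin n → ℝ) : Prop :=
  Antitone μ ∧ ∃ σ : Equiv.Perm (Fin n), μ = hA.eigenvalues ∘ σ

/-- `x ≺_w y` (weak majorization), assuming `y` is already arranged in nonincreasing order:
for every `k`, the sum of any `k` entries of `x` is at most the sum of the `k` largest
(i.e. first `k`) entries of `y`. -/
def WeakMajDesc {m n : ℕ} (x : Fin m → ℝ) (y : Fin n → ℝ) : Prop :=
  ∀ s : Finset (Fin m),
    ∑ i ∈ s, x i ≤ ∑ i ∈ univ.filter (fun j : Fin n => (j : ℕ) < s.card), y i

lemma heig {n : ℕ} (M : Matrix (Fin n) (Fin n) ℂ) (hM : M.IsHermitian) (j : Fin n) :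
    Matrix.toEuclideanLin M (hM.eigenvectorBasis j) = hM.eigenvalues j • hM.eigenvectorBasis j := by
  simpa [Matrix.toEuclideanLin_apply] using
    congrArg (WithLp.equiv 2 (Fin n → ℂ)).symm (hM.mulVec_eigenvectorBasis j)

lemma parseval {n : ℕ} (b : OrthonormalBasis (Fin n) ℂ (EuclideanSpace ℂ (Fin n)))
    (x : EuclideanSpace ℂ (Fin n)) : ∑ j, ‖⟪b j, x⟫‖ ^ 2 = ‖x‖ ^ 2 := by
  have h1 : ‖x‖ = ‖b.repr x‖ := (b.repr.norm_map x).symm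
  rw [h1, EuclideanSpace.norm_eq, Real.sq_sqrt (by positivity)]
  simp [b.repr_apply_apply]

lemma conj_mul_re (μ : ℝ) (z : ℂ) : ((starRingEnd ℂ) z * ((μ : ℂ) * z)).re = μ * ‖z‖ ^ 2 := by
  have : (starRingEnd ℂ) z * ((μ : ℂ) * z) = (μ : ℂ) * ((starRingEnd ℂ) z * z) := by ring
  rw [this, RCLike.conj_mul]
  simp [Complex.mul_re]
  exact Or.inl (by rw [← Complex.ofReal_pow, Complex.ofReal_re])

lemma quad_expand {n : ℕ} (M : Matrix (Fin n) (Fin n) ℂ) (hM : M.IsHermitian)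
    (x : EuclideanSpace ℂ (Fin n)) :
    (⟪x, Matrix.toEuclideanLin M x⟫).re
      = ∑ j, hM.eigenvalues j * ‖⟪hM.eigenvectorBasis j, x⟫‖ ^ 2 := by
  have hsym := (Matrix.isHermitian_iff_isSymmetric.mp hM)
  have key : ∀ j : Fin n, ⟪hM.eigenvectorBasis j, Matrix.toEuclideanLin M x⟫
      = (hM.eigenvalues j : ℂ) * ⟪hM.eigenvectorBasis j, x⟫ := by
    intro j
    rw [← hsym (hM.eigenvectorBasis j) x, heig M hM j]
    rw [RCLike.real_smul_eq_coe_smul (K := ℂ), inner_smul_left, RCLike.conj_ofReal]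
    norm_cast
  calc (⟪x, Matrix.toEuclideanLin M x⟫).re
      = (∑ j, ⟪x, hM.eigenvectorBasis j⟫ * ⟪hM.eigenvectorBasis j, Matrix.toEuclideanLin M x⟫).re := by
        rw [(hM.eigenvectorBasis).sum_inner_mul_inner]
    _ = ∑ j, hM.eigenvalues j * ‖⟪hM.eigenvectorBasis j, x⟫‖ ^ 2 := by
        rw [Complex.re_sum]
        refine Finset.sum_congr rfl fun j _ => ?_
        rw [key j]
        have hz : ⟪x, hM.eigenvectorBasis j⟫ = (starRingEnd ℂ) ⟪hM.eigenvectorBasis j, x⟫ :=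
          (inner_conj_symm _ _).symm
        rw [hz]
        exact conj_mul_re _ _

lemma sum_filter_lt_eq {n k : ℕ} (hk : k ≤ n) (f : Fin n → ℝ) :
    ∑ j ∈ univ.filter (fun j : Fin n => (j : ℕ) < k), f j
      = ∑ i : Fin k, f (Fin.castLE hk i) := by
  have h := Finset.sum_map univ ⟨Fin.castLE hk, Fin.castLE_injective hk⟩ f
  simp only [Function.Embedding.coeFn_mk] at h
  rw [← h]
  congr 1
  ext j
  simp only [Finset.mem_map, Finset.mem_filter, Finset.mem_univ, true_and,
    Function.Embedding.coeFn_mk]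
  constructor
  · intro hj; exact ⟨⟨j, hj⟩, rfl⟩
  · rintro ⟨i, rfl⟩; exact i.isLt

lemma card_filter_lt {n k : ℕ} (hk : k ≤ n) :
    ∑ j ∈ univ.filter (fun j : Fin n => (j : ℕ) < k), (1 : ℝ) = k := by
  rw [sum_filter_lt_eq hk]
  simp

lemma maj_aux {n k : ℕ} (hk : k ≤ n) (lam d : Fin n → ℝ) (hl : Antitone lam)
    (hd0 : ∀ j, 0 ≤ d j) (hd1 : ∀ j, d j ≤ 1) (hsum : ∑ j, d j = k) :
    ∑ j, lam j * d j ≤ ∑ j ∈ univ.filter (fun j : Fin n => (j : ℕ) < k), lam j := by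
  rcases eq_or_lt_of_le hk with rfl | hkn
  · have hone : ∀ j, d j = 1 := by
      by_contra h
      push_neg at h
      obtain ⟨j0, hj0⟩ := h
      have h2 : ∑ j, d j < ∑ _j : Fin k, (1 : ℝ) :=
        Finset.sum_lt_sum (fun j _ => hd1 j)
          ⟨j0, Finset.mem_univ _, lt_of_le_of_ne (hd1 j0) hj0⟩
      rw [hsum] at h2
      simp at h2
    have hfull : univ.filter (fun j : Fin k => (j : ℕ) < k) = univ := by
      ext j; simp [j.isLt]
    rw [hfull]
    exact le_of_eq (Finset.sum_congr rfl fun j _ => by rw [hone j, mul_one])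
  · set m := lam ⟨k, hkn⟩ with hm
    set T := univ.filter (fun j : Fin n => (j : ℕ) < k) with hT
    have hsplit := Finset.sum_filter_add_sum_filter_not univ
      (fun j : Fin n => (j : ℕ) < k) (fun j => lam j * d j)
    have h1 : ∑ j ∈ T, lam j * d j ≤ ∑ j ∈ T, (lam j + m * (d j - 1)) := by
      refine Finset.sum_le_sum fun j hj => ?_
      have hjk : (j : ℕ) < k := (Finset.mem_filter.mp hj).2
      have hlj : m ≤ lam j := hl (by simp [Fin.le_def, Nat.le_of_lt hjk])
      nlinarith [hd1 j, hd0 j]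
    have h2 : ∑ j ∈ univ.filter (fun j : Fin n => ¬ (j : ℕ) < k), lam j * d j
        ≤ ∑ j ∈ univ.filter (fun j : Fin n => ¬ (j : ℕ) < k), m * d j := by
      refine Finset.sum_le_sum fun j hj => ?_
      have hjk : k ≤ (j : ℕ) := Nat.le_of_not_lt (Finset.mem_filter.mp hj).2
      have hlj : lam j ≤ m := hl (by simp [Fin.le_def, hjk])
      exact mul_le_mul_of_nonneg_right hlj (hd0 j)
    have hdsplit := Finset.sum_filter_add_sum_filter_not univ
      (fun j : Fin n => (j : ℕ) < k) d
    have hcard := card_filter_lt (n := n) (k := k) hk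
    calc ∑ j, lam j * d j
        = ∑ j ∈ T, lam j * d j
          + ∑ j ∈ univ.filter (fun j : Fin n => ¬ (j : ℕ) < k), lam j * d j := hsplit.symm
      _ ≤ ∑ j ∈ T, (lam j + m * (d j - 1))
          + ∑ j ∈ univ.filter (fun j : Fin n => ¬ (j : ℕ) < k), m * d j := add_le_add h1 h2
      _ = ∑ j ∈ T, lam j
          + (m * (∑ j ∈ T, d j - ∑ j ∈ T, (1:ℝ))
             + m * ∑ j ∈ univ.filter (fun j : Fin n => ¬ (j : ℕ) < k), d j) := by
          rw [Finset.sum_add_distrib, ← Finset.mul_sum, ← Finset.mul_sum,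
            Finset.sum_sub_distrib]
          ring
      _ = ∑ j ∈ T, lam j + m * ((∑ j, d j) - ∑ j ∈ T, (1:ℝ)) := by
          rw [← hdsplit]; ring
      _ = ∑ j ∈ T, lam j := by rw [hsum, hT, hcard]; ring

lemma kyfan_ub {n : ℕ} (M : Matrix (Fin n) (Fin n) ℂ) (hM : M.IsHermitian)
    (μ : Fin n → ℝ) (hμ : IsEigListDesc M hM μ) {k : ℕ} (hk : k ≤ n)
    (u : Fin k → EuclideanSpace ℂ (Fin n)) (hu : Orthonormal ℂ u) :
    ∑ i, (⟪u i, Matrix.toEuclideanLin M (u i)⟫).re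
      ≤ ∑ j ∈ univ.filter (fun j : Fin n => (j : ℕ) < k), μ j := by
  obtain ⟨hmono, σ, hσ⟩ := hμ
  set v := hM.eigenvectorBasis with hv
  set d : Fin n → ℝ := fun j => ∑ i, ‖⟪v (σ j), u i⟫‖ ^ 2 with hd
  have hLHS : ∑ i, (⟪u i, Matrix.toEuclideanLin M (u i)⟫).re = ∑ j, μ j * d j := by
    calc ∑ i, (⟪u i, Matrix.toEuclideanLin M (u i)⟫).re
        = ∑ i, ∑ j, hM.eigenvalues j * ‖⟪v j, u i⟫‖ ^ 2 :=
          Finset.sum_congr rfl fun i _ => quad_expand M hM (u i)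
      _ = ∑ j, ∑ i, hM.eigenvalues j * ‖⟪v j, u i⟫‖ ^ 2 := Finset.sum_comm
      _ = ∑ j, hM.eigenvalues j * ∑ i, ‖⟪v j, u i⟫‖ ^ 2 := by
          simp [Finset.mul_sum]
      _ = ∑ j, hM.eigenvalues (σ j) * ∑ i, ‖⟪v (σ j), u i⟫‖ ^ 2 :=
          (Equiv.sum_comp σ (fun j => hM.eigenvalues j * ∑ i, ‖⟪v j, u i⟫‖ ^ 2)).symm
      _ = ∑ j, μ j * d j := by rw [hσ]; rfl
  rw [hLHS]
  refine maj_aux hk μ d hmono (fun j => by positivity) (fun j => ?_) ?_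
  · have hb := hu.sum_inner_products_le (v (σ j)) (s := univ)
    have hnv : ‖v (σ j)‖ = 1 := hv ▸ hM.eigenvectorBasis.orthonormal.1 (σ j)
    rw [hnv] at hb
    calc d j = ∑ i, ‖⟪u i, v (σ j)⟫‖ ^ 2 := by
          refine Finset.sum_congr rfl fun i _ => by rw [norm_inner_symm]
      _ ≤ 1 ^ 2 := hb
      _ = 1 := one_pow 2
  · calc ∑ j, d j
        = ∑ j, ∑ i, ‖⟪v j, u i⟫‖ ^ 2 :=
          Equiv.sum_comp σ (fun j => ∑ i, ‖⟪v j, u i⟫‖ ^ 2)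
      _ = ∑ i, ∑ j, ‖⟪v j, u i⟫‖ ^ 2 := Finset.sum_comm
      _ = ∑ _i : Fin k, (1 : ℝ) := by
          refine Finset.sum_congr rfl fun i _ => ?_
          rw [parseval v (u i), hu.1 i, one_pow]
      _ = k := by simp

/-- `Λ(A+B) ≺_w Λ(A) + Λ(B)` for Hermitian matrices `A` and `B`: for each `k`, the sum of the
`k` largest eigenvalues of `A+B` is at most the sum of the `k` largest eigenvalues of `A`
plus the sum of the `k` largest eigenvalues of `B`. -/
theorem eig_add_weakMaj {n : ℕ} (A B : Matrix (Fin n) (Fin n) ℂ)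
    (hA : A.IsHermitian) (hB : B.IsHermitian)
    (a b c : Fin n → ℝ)
    (ha : IsEigListDesc A hA a) (hb : IsEigListDesc B hB b)
    (hc : IsEigListDesc (A + B) (hA.add hB) c) :
    WeakMajDesc c (a + b) := by
  intro s
  have hk : s.card ≤ n := le_trans (Finset.card_le_univ s) (by simp)
  obtain ⟨hcm, τ, hτ⟩ := hc
  -- Step 1: sum over s ≤ sum of first k entries of c
  have step1 : ∑ i ∈ s, c i ≤ ∑ j ∈ univ.filter (fun j : Fin n => (j : ℕ) < s.card), c j := by
    have heq : ∑ i ∈ s, c i = ∑ j, c j * (if j ∈ s then (1:ℝ) else 0) := by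
      simp [mul_ite, mul_one, mul_zero, Finset.sum_ite_mem, Finset.univ_inter]
    rw [heq]
    refine maj_aux hk c _ hcm (fun j => by split <;> norm_num)
      (fun j => by split <;> norm_num) ?_
    simp [Finset.sum_ite_mem, Finset.univ_inter]
  -- Step 2: the eigenvectors of A+B for the k largest eigenvalues
  set w := (hA.add hB).eigenvectorBasis with hw
  set u : Fin s.card → EuclideanSpace ℂ (Fin n) :=
    fun i => w (τ (Fin.castLE hk i)) with hu_def
  have hu : Orthonormal ℂ u :=
    (hA.add hB).eigenvectorBasis.orthonormal.comp
      (fun i => τ (Fin.castLE hk i)) ((Equiv.injective τ).comp (Fin.castLE_injective hk))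
  have hq : ∀ i : Fin s.card,
      (⟪u i, Matrix.toEuclideanLin (A + B) (u i)⟫).re = c (Fin.castLE hk i) := by
    intro i
    rw [hu_def]
    simp only
    rw [heig (A + B) (hA.add hB) (τ (Fin.castLE hk i))]
    rw [RCLike.real_smul_eq_coe_smul (K := ℂ), inner_smul_right, inner_self_eq_norm_sq_to_K]
    have hnw : ‖w (τ (Fin.castLE hk i))‖ = 1 :=
      (hA.add hB).eigenvectorBasis.orthonormal.1 (τ (Fin.castLE hk i))
    rw [hτ]
    simp [hnw]
  -- Step 3: split into A and B parts
  have step3 : ∑ j ∈ univ.filter (fun j : Fin n => (j : ℕ) < s.card), c j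
      = ∑ i, (⟪u i, Matrix.toEuclideanLin A (u i)⟫).re
        + ∑ i, (⟪u i, Matrix.toEuclideanLin B (u i)⟫).re := by
    rw [sum_filter_lt_eq hk c]
    rw [← Finset.sum_add_distrib]
    refine Finset.sum_congr rfl fun i _ => ?_
    rw [← hq i]
    rw [map_add (Matrix.toEuclideanLin)]
    simp only [LinearMap.add_apply, inner_add_right, Complex.add_re]
  have step4a := kyfan_ub A hA a ha hk u hu
  have step4b := kyfan_ub B hB b hb hk u hu
  have final : ∑ j ∈ univ.filter (fun j : Fin n => (j : ℕ) < s.card), (a + b) j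
      = ∑ j ∈ univ.filter (fun j : Fin n => (j : ℕ) < s.card), a j
        + ∑ j ∈ univ.filter (fun j : Fin n => (j : ℕ) < s.card), b j := by
    simp [Finset.sum_add_distrib]
  calc ∑ i ∈ s, c i
      ≤ ∑ j ∈ univ.filter (fun j : Fin n => (j : ℕ) < s.card), c j := step1
    _ = ∑ i, (⟪u i, Matrix.toEuclideanLin A (u i)⟫).re
        + ∑ i, (⟪u i, Matrix.toEuclideanLin B (u i)⟫).re := step3
    _ ≤ ∑ j ∈ univ.filter (fun j : Fin n => (j : ℕ) < s.card), a j
        + ∑ j ∈ univ.filter (fun j : Fin n => (j : ℕ) < s.card), b j := add_le_add step4a step4b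
    _ = ∑ j ∈ univ.filter (fun j : Fin n => (j : ℕ) < s.card), (a + b) j := final.symm
end

section
/- Lidskii's theorem: Let A and B be Hermitian operators on an n-dimensional inner product space. For any indices 1 ≤ i₁ < ⋯ < i_k ≤ n, one has Σ_{j=1}^k λ_{i_j}(A+B) ≤ Σ_{j=1}^k λ_{i_j}(A) + Σ_{j=1}^k λ_j(B), where λ_i(·) denotes the i-th largest eigenvalue. -/
open Finset

/-!
Let `t = λ_k(B)` and let `P` have the eigenvectors of `B` with eigenvalues `(λ_j(B) - t)⁺`.
Then `P ≥ 0` and `B ≤ P + t`, so Weyl's monotonicity principle gives `λ_i(A) ≤ λ_i(A + P)` and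
`λ_i(A + B) ≤ λ_i(A + P) + t` for every `i`. Hence the sum of `λ_i(A + B) - λ_i(A)` over the
chosen `k` indices is at most `k t` plus the sum of the nonnegative numbers `λ_i(A + P) - λ_i(A)`
over all `i`, which is `tr P = ∑_{j ≤ k} λ_j(B) - k t`.
-/

open Module
open scoped InnerProductSpace

lemma Function.Injective.sum_comp_le_sum_of_nonneg {ι κ M : Type*} [Fintype ι] [Fintype κ]
    [AddCommMonoid M] [Preorder M] [AddLeftMono M] {f : ι → M} (hf : ∀ i, 0 ≤ f i) {g : κ → ι}
    (hg : Function.Injective g) : ∑ j, f (g j) ≤ ∑ i, f i :=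
  (sum_map univ ⟨g, hg⟩ f).symm.trans_le (sum_le_univ_sum_of_nonneg hf)

lemma Antitone.sum_castLE_eq_sum_posPart_add {n k : ℕ} {b : Fin n → ℝ} (hb : Antitone b)
    (hk : k + 1 ≤ n) :
    ∑ j : Fin (k + 1), b (Fin.castLE hk j) = ∑ i, (b i - b ⟨k, hk⟩)⁺ + (k + 1) * b ⟨k, hk⟩ := by
  set t := b ⟨k, hk⟩
  have hsupp : ∑ i, (b i - t)⁺ = ∑ i ∈ univ.map (Fin.castLEEmb hk), (b i - t)⁺ := by
    refine (sum_subset (subset_univ _) fun i _ hi => posPart_of_nonpos ?_).symm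
    have hki : ⟨k, hk⟩ ≤ i := by
      by_contra! hik
      exact hi (mem_map.mpr ⟨⟨i, by have : (i : ℕ) < k := hik; omega⟩, mem_univ _, rfl⟩)
    linarith [hb hki]
  have hpos (j : Fin (k + 1)) : (b (Fin.castLE hk j) - t)⁺ = b (Fin.castLE hk j) - t :=
    posPart_of_nonneg (sub_nonneg.mpr (hb (Fin.le_def.mpr (by simp; omega))))
  rw [hsupp, sum_map]
  simp only [Fin.castLEEmb_apply, hpos, sum_sub_distrib, sum_const, card_univ, Fintype.card_fin,
    nsmul_eq_mul]
  push_cast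
  ring

namespace OrthonormalBasis

variable {𝕜 E ι : Type*} [RCLike 𝕜] [NormedAddCommGroup E] [InnerProductSpace 𝕜 E] [Fintype ι]

lemma repr_eq_zero_of_mem_span (w : OrthonormalBasis ι 𝕜 E) {s : Set ι} {x : E}
    (hx : x ∈ Submodule.span 𝕜 (w '' s)) {j : ι} (hj : j ∉ s) : w.repr x j = 0 := by
  rw [w.repr_apply_apply]
  induction hx using Submodule.span_induction with
  | mem z hz =>
    obtain ⟨i, hi, rfl⟩ := hz
    exact w.orthonormal.2 fun hji => hj (hji ▸ hi)
  | zero => exact inner_zero_right _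
  | add _ _ _ _ hy hz => rw [inner_add_right, hy, hz, add_zero]
  | smul c _ _ hy => rw [inner_smul_right, hy, mul_zero]

lemma finrank_span_image (w : OrthonormalBasis ι 𝕜 E) (s : Finset ι) :
    finrank 𝕜 (Submodule.span 𝕜 (w '' s)) = s.card := by
  have hli := w.orthonormal.linearIndependent.comp (Subtype.val : s → ι) Subtype.val_injective
  rw [show w '' s = Set.range (w ∘ Subtype.val : s → E) by ext; simp, finrank_span_eq_card hli]
  simp

end OrthonormalBasis

namespace LinearMap

variable {𝕜 E ι : Type*} [RCLike 𝕜] [NormedAddCommGroup E] [InnerProductSpace 𝕜 E] [Fintype ι]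

def HasEigenbasis (T : E →ₗ[𝕜] E) (w : OrthonormalBasis ι 𝕜 E) (a : ι → ℝ) : Prop :=
  ∀ i, T (w i) = (a i : 𝕜) • w i

lemma exists_hasEigenbasis (w : OrthonormalBasis ι 𝕜 E) (a : ι → ℝ) :
    ∃ T : E →ₗ[𝕜] E, T.HasEigenbasis w a :=
  ⟨w.toBasis.constr 𝕜 fun i => (a i : 𝕜) • w i, fun i => by
    simpa using w.toBasis.constr_basis 𝕜 (fun i => (a i : 𝕜) • w i) i⟩

lemma IsSymmetric.exists_hasEigenbasis_antitone [FiniteDimensional 𝕜 E] {n : ℕ}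
    {T : E →ₗ[𝕜] E} (hT : T.IsSymmetric) (hn : finrank 𝕜 E = n) :
    ∃ (w : OrthonormalBasis (Fin n) 𝕜 E) (a : Fin n → ℝ), Antitone a ∧ T.HasEigenbasis w a :=
  ⟨hT.eigenvectorBasis hn, hT.eigenvalues hn, hT.eigenvalues_antitone hn,
    hT.apply_eigenvectorBasis hn⟩

namespace HasEigenbasis

section

variable {T S : E →ₗ[𝕜] E} {w : OrthonormalBasis ι 𝕜 E} {a b : ι → ℝ}

lemma repr_apply (h : T.HasEigenbasis w a) (x : E) (i : ι) :
    w.repr (T x) i = a i * w.repr x i := by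
  classical
  conv_lhs => rw [← w.sum_repr x]
  simp [map_sum, h _, smul_smul, OrthonormalBasis.repr_self, Pi.single_apply, mul_comm]

lemma re_inner_self_apply (h : T.HasEigenbasis w a) (x : E) :
    RCLike.re ⟪x, T x⟫_𝕜 = ∑ i, a i * ‖w.repr x i‖ ^ 2 := by
  rw [← w.repr.inner_map_map, PiLp.inner_apply, map_sum]
  refine sum_congr rfl fun i _ => ?_
  rw [h.repr_apply, RCLike.inner_apply, mul_assoc, RCLike.mul_conj]
  norm_cast

lemma isSymmetric (h : T.HasEigenbasis w a) : T.IsSymmetric := by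
  intro x y
  rw [← w.repr.inner_map_map, ← w.repr.inner_map_map, PiLp.inner_apply, PiLp.inner_apply]
  refine sum_congr rfl fun i _ => ?_
  simp only [h.repr_apply, RCLike.inner_apply, map_mul, RCLike.conj_ofReal]
  ring

lemma trace_eq (h : T.HasEigenbasis w a) : T.trace 𝕜 E = ∑ i, (a i : 𝕜) := by
  simp [trace_eq_sum_inner T w, h _, inner_smul_right]

lemma add_smul_id (h : T.HasEigenbasis w a) (t : ℝ) :
    (T + (t : 𝕜) • LinearMap.id).HasEigenbasis w (fun i => a i + t) := by
  intro i
  simp [h i, add_smul]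

lemma re_inner_self_le (hT : T.HasEigenbasis w a) (hS : S.HasEigenbasis w b) (hab : a ≤ b)
    (x : E) : RCLike.re ⟪x, T x⟫_𝕜 ≤ RCLike.re ⟪x, S x⟫_𝕜 := by
  rw [hT.re_inner_self_apply, hS.re_inner_self_apply]
  gcongr with i
  exact hab i

lemma le_re_inner_self_of_mem_span (h : T.HasEigenbasis w a) {s : Set ι} {r : ℝ}
    (hs : ∀ j ∈ s, r ≤ a j) {x : E} (hx : x ∈ Submodule.span 𝕜 (w '' s)) :
    r * ‖x‖ ^ 2 ≤ RCLike.re ⟪x, T x⟫_𝕜 := by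
  rw [h.re_inner_self_apply, ← w.repr.norm_map, EuclideanSpace.norm_sq_eq, mul_sum]
  refine sum_le_sum fun j _ => ?_
  by_cases hj : j ∈ s
  · exact mul_le_mul_of_nonneg_right (hs j hj) (sq_nonneg _)
  · simp [w.repr_eq_zero_of_mem_span hx hj]

lemma re_inner_self_le_of_mem_span (h : T.HasEigenbasis w a) {s : Set ι} {r : ℝ}
    (hs : ∀ j ∈ s, a j ≤ r) {x : E} (hx : x ∈ Submodule.span 𝕜 (w '' s)) :
    RCLike.re ⟪x, T x⟫_𝕜 ≤ r * ‖x‖ ^ 2 := by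
  rw [h.re_inner_self_apply, ← w.repr.norm_map, EuclideanSpace.norm_sq_eq, mul_sum]
  refine sum_le_sum fun j _ => ?_
  by_cases hj : j ∈ s
  · exact mul_le_mul_of_nonneg_right (hs j hj) (sq_nonneg _)
  · simp [w.repr_eq_zero_of_mem_span hx hj]

end

variable {n : ℕ} {T S : E →ₗ[𝕜] E} {w v : OrthonormalBasis (Fin n) 𝕜 E} {a b : Fin n → ℝ}

/-- Weyl's monotonicity principle. The span of the first `i + 1` eigenvectors of `T` meets the
span of the last `n - i` eigenvectors of `S`; a unit vector there witnesses `a i ≤ b i`. -/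
lemma le_of_re_inner_self_le (hT : T.HasEigenbasis w a) (hS : S.HasEigenbasis v b)
    (ha : Antitone a) (hb : Antitone b)
    (hTS : ∀ x, RCLike.re ⟪x, T x⟫_𝕜 ≤ RCLike.re ⟪x, S x⟫_𝕜) (i : Fin n) : a i ≤ b i := by
  have := w.toBasis.finiteDimensional_of_finite
  set U := Submodule.span 𝕜 (w '' ↑(Iic i))
  set V := Submodule.span 𝕜 (v '' ↑(Ici i))
  have hUV : ¬ Disjoint U V := by
    intro hdisj
    have := Submodule.finrank_add_finrank_le_of_disjoint hdisj
    rw [w.finrank_span_image, v.finrank_span_image, Fin.card_Iic, Fin.card_Ici,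
      finrank_eq_card_basis w.toBasis, Fintype.card_fin] at this
    omega
  obtain ⟨x, hxU, hxV, hx⟩ : ∃ x ∈ U, x ∈ V ∧ x ≠ 0 := by
    simpa [Submodule.disjoint_def] using hUV
  have hlow := hT.le_re_inner_self_of_mem_span (fun j hj => ha (mem_Iic.mp hj)) hxU
  have hup := hS.re_inner_self_le_of_mem_span (fun j hj => hb (mem_Ici.mp hj)) hxV
  have hx2 : 0 < ‖x‖ ^ 2 := by positivity
  exact le_of_mul_le_mul_right ((hlow.trans (hTS x)).trans hup) hx2

end HasEigenbasis

theorem lidskii_of_hasEigenbasis {n : ℕ} {T S : E →ₗ[𝕜] E}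
    {wa wb wc : OrthonormalBasis (Fin n) 𝕜 E} {a b c : Fin n → ℝ} (hTa : T.HasEigenbasis wa a)
    (hSb : S.HasEigenbasis wb b) (hTSc : (T + S).HasEigenbasis wc c) (ha : Antitone a)
    (hb : Antitone b) (hc : Antitone c) {k : ℕ} (hk : k ≤ n) {idx : Fin k → Fin n}
    (hidx : Function.Injective idx) :
    ∑ j, c (idx j) ≤ ∑ j, a (idx j) + ∑ j, b (Fin.castLE hk j) := by
  cases k with
  | zero => simp
  | succ k =>
  set t := b ⟨k, hk⟩
  obtain ⟨P, hP⟩ := exists_hasEigenbasis wb fun i => (b i - t)⁺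
  have := wa.toBasis.finiteDimensional_of_finite
  obtain ⟨wd, d, hd, hTPd⟩ := (hTa.isSymmetric.add hP.isSymmetric).exists_hasEigenbasis_antitone
    ((finrank_eq_card_basis wa.toBasis).trans (Fintype.card_fin n))
  have hcd : ∀ i, c i ≤ d i + t := by
    refine hTSc.le_of_re_inner_self_le (hTPd.add_smul_id t) hc (hd.add_const t) fun x => ?_
    have hSP := hSb.re_inner_self_le (hP.add_smul_id t)
      (fun i => by linarith [le_posPart (b i - t)]) x
    simp only [add_apply, inner_add_right, map_add] at hSP ⊢
    linarith
  have had : ∀ i, a i ≤ d i := by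
    refine hTa.le_of_re_inner_self_le hTPd ha hd fun x => ?_
    have hP0 : 0 ≤ RCLike.re ⟪x, P x⟫_𝕜 := by rw [hP.re_inner_self_apply]; positivity
    simp only [add_apply, inner_add_right, map_add]
    linarith
  have htrace : ∑ i, d i = ∑ i, a i + ∑ i, (b i - t)⁺ := by
    have := hTPd.trace_eq
    rw [map_add, hTa.trace_eq, hP.trace_eq] at this
    exact_mod_cast this.symm
  have hsub : ∑ j, (d (idx j) - a (idx j)) ≤ ∑ i, (d i - a i) :=
    hidx.sum_comp_le_sum_of_nonneg fun i => sub_nonneg.mpr (had i)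
  have hct : ∑ j, c (idx j) ≤ ∑ j, d (idx j) + (k + 1) * t :=
    calc ∑ j, c (idx j) ≤ ∑ j, (d (idx j) + t) := sum_le_sum fun j _ => hcd (idx j)
      _ = ∑ j, d (idx j) + (k + 1) * t := by simp [sum_add_distrib]
  simp only [sum_sub_distrib] at hsub
  rw [hb.sum_castLE_eq_sum_posPart_add]
  linarith

end LinearMap

lemma Matrix.IsHermitian.hasEigenbasis_toEuclideanLin {𝕜 ι : Type*} [RCLike 𝕜] [Fintype ι]
    [DecidableEq ι] {A : Matrix ι ι 𝕜} (hA : A.IsHermitian) (σ : Equiv.Perm ι) :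
    (toEuclideanLin A).HasEigenbasis (hA.eigenvectorBasis.reindex σ.symm) (hA.eigenvalues ∘ σ) := by
  intro j
  rw [OrthonormalBasis.reindex_apply, Equiv.symm_symm]
  ext i
  rw [ofLp_toLpLin, toLin'_apply, hA.mulVec_eigenvectorBasis (σ j)]
  simp [RCLike.real_smul_eq_coe_mul]

lemma IsEigListDesc.exists_hasEigenbasis {n : ℕ} {A : Matrix (Fin n) (Fin n) ℂ}
    {hA : A.IsHermitian} {μ : Fin n → ℝ} (h : IsEigListDesc A hA μ) :
    ∃ w, (Matrix.toEuclideanLin A).HasEigenbasis w μ := by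
  obtain ⟨-, σ, rfl⟩ := h
  exact ⟨_, hA.hasEigenbasis_toEuclideanLin σ⟩

/-- Lidskii's theorem: for Hermitian `A`, `B` and any indices `i₁ < ⋯ < i_k`,
`Σ_j λ_{i_j}(A+B) ≤ Σ_j λ_{i_j}(A) + Σ_{j=1}^k λ_j(B)`. -/
theorem lidskii {n : ℕ} (A B : Matrix (Fin n) (Fin n) ℂ)
    (hA : A.IsHermitian) (hB : B.IsHermitian)
    (a b c : Fin n → ℝ)
    (ha : IsEigListDesc A hA a) (hb : IsEigListDesc B hB b)
    (hc : IsEigListDesc (A + B) (hA.add hB) c)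
    (k : ℕ) (hk : k ≤ n) (idx : Fin k → Fin n) (hidx : StrictMono idx) :
    ∑ j : Fin k, c (idx j) ≤
      ∑ j : Fin k, a (idx j) + ∑ j : Fin k, b (Fin.castLE hk j) := by
  obtain ⟨wa, hwa⟩ := ha.exists_hasEigenbasis
  obtain ⟨wb, hwb⟩ := hb.exists_hasEigenbasis
  obtain ⟨wc, hwc⟩ := hc.exists_hasEigenbasis
  rw [map_add] at hwc
  exact LinearMap.lidskii_of_hasEigenbasis hwa hwb hwc ha.1 hb.1 hc.1 hk hidx.injective
end

section
/- Let A be a Hermitian operator on a finite-dimensional inner product space H with eigenvalues in [0,1]. Then there exist subspaces X and Y of H² = H ⊕ H and orthogonal projectors P_X, P_Y such that A is unitarily equivalent to the restriction (P_X P_Y)|_X of P_X P_Y to its invariant subspace X. -/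
/-!
Since its eigenvalues lie in `[0, 1]`, `0 ≤ A ≤ 1`, so `B = √A` and `C = √(1 - A)` exist and
`B*B + C*C = 1`. Hence the column `T x = (B x, C x)` is an isometry `H → H ⊕ H`, and the
projector onto its range `Y` is `T T*`. For `J x = (x, 0)` with range `X`, this gives
`P_X P_Y J = J (J* T)(J* T)* = J B B* = J A`.
-/

noncomputable def proj {E : Type*} [NormedAddCommGroup E] [InnerProductSpace ℂ E]
    [FiniteDimensional ℂ E] (K : Submodule ℂ E) : E →L[ℂ] E :=
  K.subtypeL.comp (Submodule.orthogonalProjection K)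

namespace ContinuousLinearMap

section

variable {𝕜 E F H : Type*} [RCLike 𝕜]
  [NormedAddCommGroup E] [InnerProductSpace 𝕜 E]
  [NormedAddCommGroup F] [InnerProductSpace 𝕜 F]
  [NormedAddCommGroup H] [InnerProductSpace 𝕜 H]

def prodL2 (B : H →L[𝕜] E) (C : H →L[𝕜] F) : H →L[𝕜] WithLp 2 (E × F) :=
  (WithLp.prodContinuousLinearEquiv 2 𝕜 E F).symm.toContinuousLinearMap ∘L B.prod C

@[simp]
theorem prodL2_apply (B : H →L[𝕜] E) (C : H →L[𝕜] F) (x : H) :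
    B.prodL2 C x = WithLp.toLp 2 (B x, C x) := rfl

variable [CompleteSpace E] [CompleteSpace F] [CompleteSpace H]

theorem adjoint_prodL2_comp_prodL2 {G : Type*} [NormedAddCommGroup G] [InnerProductSpace 𝕜 G]
    [CompleteSpace G] (B : H →L[𝕜] E) (C : H →L[𝕜] F) (B' : G →L[𝕜] E) (C' : G →L[𝕜] F) :
    adjoint (B.prodL2 C) ∘L B'.prodL2 C' = adjoint B ∘L B' + adjoint C ∘L C' := by
  ext1 y
  refine ext_inner_left 𝕜 fun x => ?_
  simp [adjoint_inner_right, WithLp.prod_inner_apply, inner_add_right]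

theorem starProjection_range_of_adjoint_comp_self {T : F →L[𝕜] E} (hT : adjoint T ∘L T = 1)
    [T.range.HasOrthogonalProjection] : T.range.starProjection = T ∘L adjoint T := by
  ext u
  refine Submodule.eq_starProjection_of_mem_of_inner_eq_zero
    (LinearMap.mem_range_self (T : F →ₗ[𝕜] E) _) ?_
  rintro _ ⟨a, rfl⟩
  have hTTT : adjoint T (T (adjoint T u)) = adjoint T u := by
    simpa using congr($hT (adjoint T u))
  rw [coe_coe, ← adjoint_inner_left, map_sub, comp_apply, hTTT, sub_self, inner_zero_left]

theorem starProjection_range_comp_starProjection_range_comp {J : H →L[𝕜] E} {T : F →L[𝕜] E}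
    (hJ : adjoint J ∘L J = 1) (hT : adjoint T ∘L T = 1)
    [J.range.HasOrthogonalProjection] [T.range.HasOrthogonalProjection] :
    J.range.starProjection ∘L T.range.starProjection ∘L J
      = J ∘L (adjoint J ∘L T) ∘L adjoint (adjoint J ∘L T) := by
  rw [starProjection_range_of_adjoint_comp_self hJ, starProjection_range_of_adjoint_comp_self hT,
    adjoint_comp, adjoint_adjoint]
  simp only [comp_assoc]

end

section

variable {H : Type*} [NormedAddCommGroup H] [InnerProductSpace ℂ H] [CompleteSpace H]

theorem adjoint_sqrt (a : H →L[ℂ] H) : adjoint (CFC.sqrt a) = CFC.sqrt a := by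
  rw [← star_eq_adjoint, (CFC.sqrt_nonneg a).isSelfAdjoint.star_eq]

theorem sqrt_comp_sqrt {a : H →L[ℂ] H} (ha : 0 ≤ a) : CFC.sqrt a ∘L CFC.sqrt a = a :=
  CFC.sqrt_mul_sqrt_self a ha

end

end ContinuousLinearMap

theorem spectrum_real_subset_of_eigenvalues_mem {H : Type*} [NormedAddCommGroup H]
    [InnerProductSpace ℂ H] [FiniteDimensional ℂ H] {A : H →L[ℂ] H} {S : Set ℝ}
    (h : ∀ (μ : ℝ) (v : H), v ≠ 0 → A v = (μ : ℂ) • v → μ ∈ S) : spectrum ℝ A ⊆ S := by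
  intro μ hμ
  rw [← spectrum.algebraMap_mem_iff ℂ, ContinuousLinearMap.spectrum_eq,
    ← Module.End.hasEigenvalue_iff_mem_spectrum] at hμ
  obtain ⟨v, hv, hv0⟩ := hμ.exists_hasEigenvector
  exact h μ v hv0 (Module.End.mem_eigenspace_iff.mp hv)

open ContinuousLinearMap

theorem proj_eq_starProjection {E : Type*} [NormedAddCommGroup E] [InnerProductSpace ℂ E]
    [FiniteDimensional ℂ E] (K : Submodule ℂ E) : proj K = K.starProjection := rfl

/-- Let `A` be a self-adjoint operator on a finite-dimensional inner product space `H`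
with all eigenvalues in `[0,1]`. Then there are subspaces `X`, `Y` of `H² = H ⊕ H`
(with the `ℓ²` inner product) such that `X` is invariant under `P_X P_Y` and `A` is
unitarily equivalent to the restriction `(P_X P_Y)|_X`: there is a unitary `U : H ≃ X`
with `(P_X P_Y)(U v) = U (A v)` for all `v`. -/
theorem hermitian_unitarily_equiv_proj_restriction {H : Type*} [NormedAddCommGroup H]
    [InnerProductSpace ℂ H] [FiniteDimensional ℂ H]
    (A : H →L[ℂ] H) (hA : IsSelfAdjoint A)
    (heig : ∀ (μ : ℝ) (v : H), v ≠ 0 → A v = (μ : ℂ) • v → μ ∈ Set.Icc (0 : ℝ) 1) :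
    ∃ X Y : Submodule ℂ (WithLp 2 (H × H)),
      (∀ v ∈ X, (proj X) ((proj Y) v) ∈ X) ∧
      ∃ U : H ≃ₗᵢ[ℂ] X, ∀ v : H,
        (proj X) ((proj Y) (U v : WithLp 2 (H × H))) = (U (A v) : WithLp 2 (H × H)) := by
  have hspec : spectrum ℝ A ⊆ Set.Icc 0 1 := spectrum_real_subset_of_eigenvalues_mem heig
  have hA₀ : 0 ≤ A :=
    (StarOrderedRing.nonneg_iff_spectrum_nonneg A hA).mpr fun x hx => (hspec hx).1
  have hA₁ : 0 ≤ 1 - A := sub_nonneg.mpr <| (CFC.le_one_iff A hA).mpr fun x hx => (hspec hx).2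
  let J := (ContinuousLinearMap.id ℂ H).prodL2 (0 : H →L[ℂ] H)
  let T := (CFC.sqrt A).prodL2 (CFC.sqrt (1 - A))
  have hJ : adjoint J ∘L J = 1 := by simp [J, adjoint_prodL2_comp_prodL2, adjoint_id, one_def]
  have hT : adjoint T ∘L T = 1 := by
    rw [adjoint_prodL2_comp_prodL2, adjoint_sqrt, adjoint_sqrt, sqrt_comp_sqrt hA₀,
      sqrt_comp_sqrt hA₁, add_sub_cancel]
  have hJT : adjoint J ∘L T = CFC.sqrt A := by simp [J, T, adjoint_prodL2_comp_prodL2, adjoint_id]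
  have hPPJ := starProjection_range_comp_starProjection_range_comp hJ hT
  rw [hJT, adjoint_sqrt, sqrt_comp_sqrt hA₀] at hPPJ
  let Jᵢ : H →ₗᵢ[ℂ] WithLp 2 (H × H) := ⟨J, (norm_map_iff_adjoint_comp_self J).mpr hJ⟩
  refine ⟨J.range, T.range, fun v _ => ?_, Jᵢ.equivRange, fun v => ?_⟩
  · rw [proj_eq_starProjection]
    exact Submodule.starProjection_apply_mem _ _
  · rw [proj_eq_starProjection, proj_eq_starProjection]
    exact congr($hPPJ v)
end
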